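/- In any metabelian Novikov algebra A, for all a,b,c,d,e in A, (((a*b)*c)*d)*e = (((a*c)*b)*d)*e, i.e., in left-normed products of degree 5 the second and third factors can be interchanged. -/

import Mathlib

/-!
Right symmetry rewrites `(a*b)*c - (a*c)*b` as `a*(b*c) - a*(c*b)`, so it suffices to show that
`((a*(b*c))*d)*e` is symmetric in `b, c`. Metabelianity together with left commutativity kills
every product `u*((x*y)*z)`, and then right symmetry lets one push the outer factors `d`, `e`
inside: `((a*(b*c))*d)*e = a*(b*(e*(d*c)))`. In such a product the innermost pairs may be
commuted and left commutativity moves `b` and `c` past each other.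
-/

namespace Novikov

variable {A : Type*} [NonUnitalNonAssocRing A]

theorem mul_mul_mul_eq_zero (lcom : ∀ a b c : A, a * (b * c) = b * (a * c))
    (metab : ∀ a b c d : A, (a * b) * (c * d) = 0) (u x y z : A) :
    u * (x * y * z) = 0 := by
  rw [lcom, metab]

theorem mul_mul_mul_comm_right (lcom : ∀ a b c : A, a * (b * c) = b * (a * c))
    (rsym : ∀ a b c : A, (a * b) * c - a * (b * c) = (a * c) * b - a * (c * b))
    (metab : ∀ a b c d : A, (a * b) * (c * d) = 0) (u z y w : A) :
    u * (z * (y * w)) = u * (z * (w * y)) := by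
  have h : z * (y * w) - z * (w * y) = z * y * w - z * w * y :=
    (sub_eq_sub_iff_sub_eq_sub.mp (rsym z y w)).symm
  rw [← sub_eq_zero, ← mul_sub, h, mul_sub, mul_mul_mul_eq_zero lcom metab,
    mul_mul_mul_eq_zero lcom metab, sub_zero]

theorem mul_mul_mul_mul_right (lcom : ∀ a b c : A, a * (b * c) = b * (a * c))
    (rsym : ∀ a b c : A, (a * b) * c - a * (b * c) = (a * c) * b - a * (c * b))
    (metab : ∀ a b c d : A, (a * b) * (c * d) = 0) (p q r m : A) :
    p * (q * r) * m = -(p * (q * (m * r))) := by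
  have h := rsym p (q * r) m
  rwa [mul_mul_mul_eq_zero lcom metab, metab, lcom m q r, sub_zero, zero_sub] at h

theorem mul_mul_mul_mul_mul_right (lcom : ∀ a b c : A, a * (b * c) = b * (a * c))
    (rsym : ∀ a b c : A, (a * b) * c - a * (b * c) = (a * c) * b - a * (c * b))
    (metab : ∀ a b c d : A, (a * b) * (c * d) = 0) (a b c d e : A) :
    a * (b * c) * d * e = a * (b * (e * (d * c))) := by
  rw [mul_mul_mul_mul_right lcom rsym metab, neg_mul, mul_mul_mul_mul_right lcom rsym metab,
    neg_neg]

theorem mul_mul_mul_mul_swap (lcom : ∀ a b c : A, a * (b * c) = b * (a * c))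
    (rsym : ∀ a b c : A, (a * b) * c - a * (b * c) = (a * c) * b - a * (c * b))
    (metab : ∀ a b c d : A, (a * b) * (c * d) = 0) (a b c d e : A) :
    a * (b * (e * (d * c))) = a * (c * (e * (d * b))) := by
  rw [mul_mul_mul_comm_right lcom rsym metab b e d c, lcom e c d, lcom b c (e * d),
    mul_mul_mul_comm_right lcom rsym metab c e d b, lcom e b d]

end Novikov

theorem stmt_8_general
    {A : Type*} [NonUnitalNonAssocRing A]
    (lcom : ∀ a b c : A, a*(b*c) = b*(a*c))
    (rsym : ∀ a b c : A, (a*b)*c - a*(b*c) = (a*c)*b - a*(c*b))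
    (metab : ∀ a b c d : A, (a*b)*(c*d) = 0) :
    ∀ a b c d e : A, (((a*b)*c)*d)*e = (((a*c)*b)*d)*e := by
  intro a b c d e
  have hsym : a * b * c - a * c * b = a * (b * c) - a * (c * b) :=
    sub_eq_sub_iff_sub_eq_sub.mp (rsym a b c)
  rw [← sub_eq_zero, ← sub_mul, ← sub_mul, hsym, sub_mul, sub_mul,
    Novikov.mul_mul_mul_mul_mul_right lcom rsym metab,
    Novikov.mul_mul_mul_mul_mul_right lcom rsym metab,
    Novikov.mul_mul_mul_mul_swap lcom rsym metab, sub_self]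

/-- Setting: a nonassociative (nonunital) algebra over a field of characteristic 0. -/
theorem stmt_8 {K : Type*} [Field K] [CharZero K]
    {A : Type*} [NonUnitalNonAssocRing A] [Module K A]
    [SMulCommClass K A A] [IsScalarTower K A A]
    (lcom : ∀ a b c : A, a*(b*c) = b*(a*c))
    (rsym : ∀ a b c : A, (a*b)*c - a*(b*c) = (a*c)*b - a*(c*b))
    (metab : ∀ a b c d : A, (a*b)*(c*d) = 0) :
    ∀ a b c d e : A, (((a*b)*c)*d)*e = (((a*c)*b)*d)*e :=
  stmt_8_general lcom rsym metab
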